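/- arXiv:1602.03124 — 2 statements merged into one kernel-verified Lean document; each statement's English description precedes it below -/
import Mathlib

section
/- Let M ⊆ {0,1}^U be a coverable Δ-matroid and let w₁, w₂ ∈ U be distinct variables such that some β ∈ M satisfies β(w₁) = β(w₂). Then the identification M_{w₁=w₂} ⊆ {0,1}^{U ∖ {w₁,w₂}} is a coverable Δ-matroid. -/
/-- Flip the values of a Boolean tuple on a finite set of coordinates. -/
def flipS {V : Type*} [DecidableEq V] (α : V → Bool) (S : Finset V) : V → Bool :=
  fun v => if v ∈ S then !(α v) else α v

/-- Flip the value of a Boolean tuple at a single coordinate. -/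
def flip1 {V : Type*} [DecidableEq V] (α : V → Bool) (u : V) : V → Bool :=
  flipS α {u}

/-- `M` is a Δ-matroid. -/
def IsDeltaMatroid {V : Type*} [DecidableEq V] (M : Set (V → Bool)) : Prop :=
  M.Nonempty ∧ ∀ α ∈ M, ∀ β ∈ M, ∀ v, α v ≠ β v →
    ∃ u, α u ≠ β u ∧ flipS α {u, v} ∈ M

/-- Number of ones in a Boolean tuple. -/
def numOnes {V : Type*} [Fintype V] (α : V → Bool) : ℕ :=
  (Finset.univ.filter fun v => α v = true).card

/-- `M` is an even Δ-matroid. -/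
def IsEvenDeltaMatroid {V : Type*} [Fintype V] [DecidableEq V] (M : Set (V → Bool)) : Prop :=
  IsDeltaMatroid M ∧ ∀ α ∈ M, ∀ β ∈ M, numOnes α % 2 = numOnes β % 2

/-- `α` and `β` are even-neighbors with respect to `M`. -/
def EvenNeighbors {V : Type*} [DecidableEq V] (M : Set (V → Bool)) (α β : V → Bool) : Prop :=
  ∃ u v, u ≠ v ∧ β = flip1 (flip1 α u) v ∧ flip1 α u ∉ M

/-- Reachability via chains of even-neighbors inside `M`. -/
def Reachable {V : Type*} [DecidableEq V] (M : Set (V → Bool)) :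
    (V → Bool) → (V → Bool) → Prop :=
  Relation.ReflTransGen (fun x y => x ∈ M ∧ y ∈ M ∧ EvenNeighbors M x y)

/-- `M` is coverable. -/
def Coverable {V : Type*} [Fintype V] [DecidableEq V] (M : Set (V → Bool)) : Prop :=
  ∀ α ∈ M, ∃ Mα : Set (V → Bool),
    IsEvenDeltaMatroid Mα ∧
    (∀ β ∈ M, Reachable M α β → β ∈ Mα) ∧
    (∀ γ ∈ M, Reachable M α γ → ∀ u v,
      flip1 (flip1 γ u) v ∈ Mα → flip1 (flip1 γ u) v ∉ M →
      flip1 γ u ∈ M ∧ flip1 γ v ∈ M)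

/-- Direct product of two sets of tuples on disjoint ground sets. -/
def prodSet {U V : Type*} (M : Set (U → Bool)) (N : Set (V → Bool)) :
    Set (U ⊕ V → Bool) :=
  {h | (fun u => h (Sum.inl u)) ∈ M ∧ (fun v => h (Sum.inr v)) ∈ N}

/-- `M` is an even-zebra Δ-matroid. -/
def IsEvenZebra {V : Type*} [Fintype V] [DecidableEq V] (M : Set (V → Bool)) : Prop :=
  ∀ α ∈ M, ∃ Mα : Set (V → Bool),
    IsEvenDeltaMatroid Mα ∧
    (∀ β ∈ M, numOnes β % 2 = numOnes α % 2 → β ∈ Mα) ∧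
    (∀ β ∈ M, ∀ u v, flip1 (flip1 β u) v ∈ Mα → flip1 (flip1 β u) v ∉ M →
      flip1 β u ∈ M ∧ flip1 β v ∈ M)

/-- Identification of two variables of `M`. -/
def identify {U : Type*} [DecidableEq U] (M : Set (U → Bool)) (w₁ w₂ : U) :
    Set ({x : U // x ≠ w₁ ∧ x ≠ w₂} → Bool) :=
  {g | ∃ β ∈ M, β w₁ = β w₂ ∧ ∀ x : {x : U // x ≠ w₁ ∧ x ≠ w₂}, g x = β x.val}


/-!
A tuple `γ` agreeing on `w₁, w₂` has the same restriction as `γ ⊕ {w₁, w₂}`, so its restriction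
lies in `M_{w₁=w₂}` iff one of these two lifts lies in `M`. An exchange in `M` that moves `w₁`
(or `w₂`) is repaired by a second exchange at the other one. An even-neighbor step `g → g ⊕ {u, v}`
downstairs lifts to `γ → γ ⊕ {u, v}` or to `γ ⊕ {u, v, w₁, w₂}`; in the latter case exchanging
`γ` with `γ ⊕ {u, v, w₁, w₂}` at `u` yields a partner `wᵢ`, and
`γ → γ ⊕ {u, wᵢ} → γ ⊕ {u, v, w₁, w₂}` are two even-neighbor steps in `M`. The same exchange
inside the even Δ-matroid `Mα` (where the partner `u` is ruled out by parity) gives the third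
cover condition, so identifying `w₁, w₂` in the cover at a lift of `α` covers `M_{w₁=w₂}` at `α`.
-/

theorem numOnes_eq_sum {V : Type*} [Fintype V] (α : V → Bool) :
    numOnes α = ∑ x, (α x).toNat := by
  rw [numOnes, Finset.card_filter]
  exact Finset.sum_congr rfl fun x _ => by cases α x <;> rfl

section Flip

variable {V : Type*} [DecidableEq V]

theorem flip1_apply (α : V → Bool) (u x : V) :
    flip1 α u x = if x = u then !α x else α x := by
  simp [flip1, flipS]

@[simp]
theorem flip1_apply_self (α : V → Bool) (u : V) : flip1 α u u = !α u := by
  simp [flip1_apply]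

theorem flip1_apply_of_ne (α : V → Bool) {u x : V} (h : x ≠ u) : flip1 α u x = α x := by
  simp [flip1_apply, h]

@[simp]
theorem flip1_flip1_self (α : V → Bool) (u : V) : flip1 (flip1 α u) u = α := by
  funext x
  by_cases h : x = u <;> simp [flip1_apply, h]

theorem flip1_comm (α : V → Bool) (u v : V) :
    flip1 (flip1 α u) v = flip1 (flip1 α v) u := by
  funext x
  simp only [flip1_apply]
  split_ifs <;> simp_all

theorem flipS_pair_of_ne (α : V → Bool) {u v : V} (h : u ≠ v) :
    flipS α {u, v} = flip1 (flip1 α u) v := by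
  funext x
  simp only [flipS, flip1_apply, Finset.mem_insert, Finset.mem_singleton]
  split_ifs <;> simp_all

theorem flipS_pair_self (α : V → Bool) (u : V) : flipS α {u, u} = flip1 α u := by
  simp [flip1]

theorem flipS_apply_of_notMem (α : V → Bool) {S : Finset V} {x : V} (h : x ∉ S) :
    flipS α S x = α x := by
  simp [flipS, h]

theorem numOnes_flip1_mod_two [Fintype V] (α : V → Bool) (u : V) :
    numOnes (flip1 α u) % 2 ≠ numOnes α % 2 := by
  have hrest : ∑ x ∈ Finset.univ.erase u, (flip1 α u x).toNat
      = ∑ x ∈ Finset.univ.erase u, (α x).toNat :=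
    Finset.sum_congr rfl fun x hx => by rw [flip1_apply_of_ne _ (Finset.ne_of_mem_erase hx)]
  rw [numOnes_eq_sum, numOnes_eq_sum, ← Finset.add_sum_erase _ _ (Finset.mem_univ u),
    ← Finset.add_sum_erase _ _ (Finset.mem_univ u), hrest, flip1_apply_self]
  cases α u <;> simp <;> omega

end Flip

section DeltaMatroid

variable {V : Type*} [DecidableEq V] {M : Set (V → Bool)}

theorem IsEvenDeltaMatroid.flip1_notMem [Fintype V] (hM : IsEvenDeltaMatroid M) {α : V → Bool}
    (hα : α ∈ M) (u : V) : flip1 α u ∉ M :=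
  fun h => numOnes_flip1_mod_two α u (hM.2 _ h α hα)

theorem Reachable.tail_flip1 {α γ : V → Bool} (h : Reachable M α γ) (hγ : γ ∈ M) {u v : V}
    (huv : u ≠ v) (hu : flip1 γ u ∉ M) (hmem : flip1 (flip1 γ u) v ∈ M) :
    Reachable M α (flip1 (flip1 γ u) v) :=
  Relation.ReflTransGen.tail h ⟨hγ, hmem, u, v, huv, rfl, hu⟩

theorem IsDeltaMatroid.flip1_mem_of_flip_four (hM : IsDeltaMatroid M) {γ : V → Bool}
    (hγ : γ ∈ M) {u v a b : V} (hv : u ≠ v) (ha : u ≠ a) (hb : u ≠ b)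
    (hδ : flip1 (flip1 (flip1 (flip1 γ u) v) a) b ∈ M) :
    flip1 γ u ∈ M ∨ flip1 (flip1 γ u) v ∈ M ∨ flip1 (flip1 γ u) a ∈ M ∨
      flip1 (flip1 γ u) b ∈ M := by
  obtain ⟨x, hx, hmem⟩ := hM.2 γ hγ _ hδ u
    (by simp [flip1_apply_of_ne _ hv, flip1_apply_of_ne _ ha, flip1_apply_of_ne _ hb])
  by_cases hxu : x = u
  · subst hxu
    exact Or.inl (by rwa [flipS_pair_self] at hmem)
  rw [Finset.pair_comm, flipS_pair_of_ne _ (Ne.symm hxu)] at hmem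
  have hx' : x = v ∨ x = a ∨ x = b := by
    by_contra h
    push Not at h
    exact hx (by simp [flip1_apply_of_ne, h, hxu])
  rcases hx' with rfl | rfl | rfl <;> simp [hmem]

theorem IsDeltaMatroid.exists_exchange_of_flip_pair (hM : IsDeltaMatroid M)
    {β β' : V → Bool} (hβ' : β' ∈ M) {a b v : V} (hab : a ≠ b) (hva : v ≠ a) (hvb : v ≠ b)
    (hβab : β a = β b) (hβ'ab : β' a = β' b) (ha : β a ≠ β' a) (hv : β v ≠ β' v)
    (hη : flip1 (flip1 β a) v ∈ M) :
    ∃ y, y ≠ a ∧ y ≠ b ∧ β y ≠ β' y ∧ flip1 (flip1 (flipS β {y, v}) a) b ∈ M := by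
  set η := flip1 (flip1 β a) v with hη_def
  have hηa : η a = !β a := by simp [η, flip1_apply_of_ne _ hva.symm]
  have hηv : η v = !β v := by simp [η, flip1_apply_of_ne _ hva]
  obtain ⟨y, hy, hmem⟩ := hM.2 η hη β' hβ' b (by
    rwa [hη_def, flip1_apply_of_ne _ hvb.symm, flip1_apply_of_ne _ hab.symm, hβab.symm,
      hβ'ab.symm])
  by_cases hyb : y = b
  · subst hyb
    refine ⟨v, hva, hvb, hv, ?_⟩
    rw [flipS_pair_self] at hmem
    rwa [flipS_pair_self, flip1_comm β]
  have hya : y ≠ a := by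
    rintro rfl
    exact hy (hηa.trans (Bool.eq_not_of_ne ha.symm).symm)
  have hyv : y ≠ v := by
    rintro rfl
    exact hy (hηv.trans (Bool.eq_not_of_ne hv.symm).symm)
  refine ⟨y, hya, hyb, by rwa [hη_def, flip1_apply_of_ne _ hyv, flip1_apply_of_ne _ hya] at hy, ?_⟩
  rw [flipS_pair_of_ne _ hyb] at hmem
  rw [flipS_pair_of_ne _ hyv]
  convert hmem using 1
  simp only [η, flip1_comm]

theorem IsDeltaMatroid.exists_exchange_across_pair (hM : IsDeltaMatroid M)
    {β β' : V → Bool} (hβ : β ∈ M) (hβ' : β' ∈ M) {a b v : V} (hab : a ≠ b) (hva : v ≠ a)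
    (hvb : v ≠ b) (hβab : β a = β b) (hβ'ab : β' a = β' b) (hv : β v ≠ β' v) :
    ∃ y, y ≠ a ∧ y ≠ b ∧ β y ≠ β' y ∧
      (flipS β {y, v} ∈ M ∨ flip1 (flip1 (flipS β {y, v}) a) b ∈ M) := by
  obtain ⟨x, hx, hmem⟩ := hM.2 β hβ β' hβ' v hv
  by_cases hxa : x = a
  · subst hxa
    rw [flipS_pair_of_ne _ hva.symm] at hmem
    obtain ⟨y, hya, hyb, hy, hmem⟩ :=
      hM.exists_exchange_of_flip_pair hβ' hab hva hvb hβab hβ'ab hx hv hmem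
    exact ⟨y, hya, hyb, hy, Or.inr hmem⟩
  by_cases hxb : x = b
  · subst hxb
    rw [flipS_pair_of_ne _ hvb.symm] at hmem
    obtain ⟨y, hyb, hya, hy, hmem⟩ := hM.exists_exchange_of_flip_pair hβ' hab.symm hvb hva
      hβab.symm hβ'ab.symm hx hv hmem
    exact ⟨y, hya, hyb, hy, Or.inr (by rwa [flip1_comm])⟩
  exact ⟨x, hxa, hxb, hx, Or.inl hmem⟩

theorem IsDeltaMatroid.reachable_flip_four (hM : IsDeltaMatroid M) {β : V → Bool} (hβ : β ∈ M)
    {u v a b : V} (hv : u ≠ v) (ha : u ≠ a) (hb : u ≠ b) (hva : v ≠ a) (hvb : v ≠ b)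
    (hu : flip1 β u ∉ M) (huv : flip1 (flip1 β u) v ∉ M)
    (huab : flip1 (flip1 (flip1 β u) a) b ∉ M)
    (hδ : flip1 (flip1 (flip1 (flip1 β u) v) a) b ∈ M) :
    Reachable M β (flip1 (flip1 (flip1 (flip1 β u) v) a) b) := by
  have hstart : Reachable M β β := Relation.ReflTransGen.refl
  rcases hM.flip1_mem_of_flip_four hβ hv ha hb hδ with h | h | h | h
  · exact absurd h hu
  · exact absurd h huv
  · have := (hstart.tail_flip1 hβ ha hu h).tail_flip1 h hvb.symm huab
      (by simpa only [flip1_comm] using hδ)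
    simpa only [flip1_comm] using this
  · have := (hstart.tail_flip1 hβ hb hu h).tail_flip1 h hva.symm
      (by simpa only [flip1_comm] using huab) (by simpa only [flip1_comm] using hδ)
    simpa only [flip1_comm] using this

end DeltaMatroid

section Cover

variable {V : Type*} [Fintype V] [DecidableEq V]

/-- Conditions (1)–(3) of coverability of `M` at `α`, with covering set `Mα`. -/
structure IsCoverAt (M : Set (V → Bool)) (α : V → Bool) (Mα : Set (V → Bool)) : Prop where
  isEvenDeltaMatroid : IsEvenDeltaMatroid Mα
  mem_of_reachable : ∀ β ∈ M, Reachable M α β → β ∈ Mα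
  flip1_mem : ∀ γ ∈ M, Reachable M α γ → ∀ u v,
    flip1 (flip1 γ u) v ∈ Mα → flip1 (flip1 γ u) v ∉ M → flip1 γ u ∈ M ∧ flip1 γ v ∈ M

theorem coverable_iff {M : Set (V → Bool)} :
    Coverable M ↔ ∀ α ∈ M, ∃ Mα, IsCoverAt M α Mα :=
  forall₂_congr fun _ _ => exists_congr fun _ =>
    ⟨fun ⟨h₁, h₂, h₃⟩ => ⟨h₁, h₂, h₃⟩, fun ⟨h₁, h₂, h₃⟩ => ⟨h₁, h₂, h₃⟩⟩

variable {M Mα : Set (V → Bool)} {α γ : V → Bool}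

theorem IsCoverAt.flip1_mem_of_detour (hcov : IsCoverAt M α Mα) (hγ : γ ∈ M)
    (hreach : Reachable M α γ) {u v a b : V} (ha : u ≠ a)
    (hη : flip1 (flip1 γ u) a ∈ Mα) (hηb : flip1 (flip1 (flip1 γ u) a) b ∉ M)
    (hδ : flip1 (flip1 (flip1 (flip1 γ u) a) b) v ∈ Mα)
    (hδM : flip1 (flip1 (flip1 (flip1 γ u) a) b) v ∉ M) :
    flip1 γ u ∈ M := by
  by_contra hu
  by_cases hηM : flip1 (flip1 γ u) a ∈ M
  · exact hηb (hcov.flip1_mem _ hηM (hreach.tail_flip1 hγ ha hu hηM) b v hδ hδM).1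
  · exact hu (hcov.flip1_mem γ hγ hreach u a hη hηM).1

theorem IsCoverAt.flip1_mem_or (hcov : IsCoverAt M α Mα) (hγ : γ ∈ M)
    (hreach : Reachable M α γ) {u v a b : V} (hv : u ≠ v) (ha : u ≠ a) (hb : u ≠ b)
    (huv : flip1 (flip1 γ u) v ∉ M)
    (hδ : flip1 (flip1 (flip1 (flip1 γ u) v) a) b ∈ Mα)
    (hδM : flip1 (flip1 (flip1 (flip1 γ u) v) a) b ∉ M) :
    flip1 γ u ∈ M ∨ flip1 (flip1 (flip1 γ u) a) b ∈ M := by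
  by_contra h
  push Not at h
  obtain ⟨hu, huab⟩ := h
  have hγα := hcov.mem_of_reachable γ hγ hreach
  rcases hcov.isEvenDeltaMatroid.1.flip1_mem_of_flip_four hγα hv ha hb hδ with h | h | h | h
  · exact hcov.isEvenDeltaMatroid.flip1_notMem hγα u h
  · exact hu (hcov.flip1_mem γ hγ hreach u v h huv).1
  · exact hu (hcov.flip1_mem_of_detour (v := v) hγ hreach ha h huab
      (by simpa only [flip1_comm] using hδ) (by simpa only [flip1_comm] using hδM))
  · exact hu (hcov.flip1_mem_of_detour (v := v) (b := a) hγ hreach hb h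
      (by simpa only [flip1_comm] using huab) (by simpa only [flip1_comm] using hδ)
      (by simpa only [flip1_comm] using hδM))

end Cover

section Identify

variable {U : Type*} [DecidableEq U] {w₁ w₂ : U} {M : Set (U → Bool)} {γ : U → Bool}

local notation "res" => Subtype.restrict (fun x : U => x ≠ w₁ ∧ x ≠ w₂)

theorem restrict_mem_identify (hγ : γ ∈ M) (h : γ w₁ = γ w₂) : res γ ∈ identify M w₁ w₂ :=
  ⟨γ, hγ, h, fun _ => rfl⟩

theorem exists_of_mem_identify {g : {x : U // x ≠ w₁ ∧ x ≠ w₂} → Bool}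
    (hg : g ∈ identify M w₁ w₂) : ∃ γ ∈ M, γ w₁ = γ w₂ ∧ res γ = g :=
  let ⟨γ, hγ, h, hg⟩ := hg
  ⟨γ, hγ, h, funext fun x => (hg x).symm⟩

theorem restrict_flip1 (γ : U → Bool) (u : {x : U // x ≠ w₁ ∧ x ≠ w₂}) :
    res (flip1 γ u.val) = flip1 (res γ) u := by
  funext x
  simp [flip1_apply, Subtype.ext_iff]

theorem restrict_flipS_pair (γ : U → Bool) (u v : {x : U // x ≠ w₁ ∧ x ≠ w₂}) :
    res (flipS γ {u.val, v.val}) = flipS (res γ) {u, v} := by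
  funext x
  simp [flipS, Subtype.ext_iff]

theorem restrict_flip1_flip1_pair (γ : U → Bool) :
    res (flip1 (flip1 γ w₁) w₂) = res γ := by
  funext x
  simp [flip1_apply_of_ne _ x.prop.1, flip1_apply_of_ne _ x.prop.2]

theorem flip1_val_apply_eq (h : γ w₁ = γ w₂) (u : {x : U // x ≠ w₁ ∧ x ≠ w₂}) :
    flip1 γ u.val w₁ = flip1 γ u.val w₂ := by
  rwa [flip1_apply_of_ne _ u.prop.1.symm, flip1_apply_of_ne _ u.prop.2.symm]

theorem flipS_val_pair_apply_eq (h : γ w₁ = γ w₂) (u v : {x : U // x ≠ w₁ ∧ x ≠ w₂}) :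
    flipS γ {u.val, v.val} w₁ = flipS γ {u.val, v.val} w₂ := by
  rwa [flipS_apply_of_notMem _ (by simp [u.prop.1.symm, v.prop.1.symm]),
    flipS_apply_of_notMem _ (by simp [u.prop.2.symm, v.prop.2.symm])]

theorem flip1_flip1_pair_apply_eq (hw : w₁ ≠ w₂) (h : γ w₁ = γ w₂) :
    flip1 (flip1 γ w₁) w₂ w₁ = flip1 (flip1 γ w₁) w₂ w₂ := by
  rw [flip1_apply_of_ne _ hw, flip1_apply_self, flip1_apply_self, flip1_apply_of_ne _ hw.symm, h]

theorem eq_or_eq_flip1_flip1_of_restrict_eq (hw : w₁ ≠ w₂) {β : U → Bool} (hβ : β w₁ = β w₂)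
    (hγ : γ w₁ = γ w₂) (h : res β = res γ) : β = γ ∨ β = flip1 (flip1 γ w₁) w₂ := by
  have hoff : ∀ x, x ≠ w₁ → x ≠ w₂ → β x = γ x := fun x h₁ h₂ => congrFun h ⟨x, h₁, h₂⟩
  by_cases h₁ : β w₁ = γ w₁
  · left
    funext x
    by_cases hx₁ : x = w₁
    · rwa [hx₁]
    by_cases hx₂ : x = w₂
    · rw [hx₂, ← hβ, ← hγ, h₁]
    exact hoff x hx₁ hx₂
  · right
    have h₁' := Bool.eq_not_of_ne h₁
    funext x
    by_cases hx₁ : x = w₁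
    · simp [hx₁, flip1_apply_of_ne _ hw, h₁']
    by_cases hx₂ : x = w₂
    · rw [hx₂, flip1_apply_self, flip1_apply_of_ne _ hw.symm, ← hβ, ← hγ, h₁']
    simp [flip1_apply_of_ne _ hx₁, flip1_apply_of_ne _ hx₂, hoff x hx₁ hx₂]

theorem restrict_mem_identify_iff (hw : w₁ ≠ w₂) (h : γ w₁ = γ w₂) :
    res γ ∈ identify M w₁ w₂ ↔ γ ∈ M ∨ flip1 (flip1 γ w₁) w₂ ∈ M := by
  constructor
  · intro hγ
    obtain ⟨β, hβ, hβw, hres⟩ := exists_of_mem_identify hγ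
    rcases eq_or_eq_flip1_flip1_of_restrict_eq hw hβw h hres with rfl | rfl
    exacts [Or.inl hβ, Or.inr hβ]
  · rintro (hγ | hγ)
    · exact restrict_mem_identify hγ h
    · simpa only [restrict_flip1_flip1_pair] using
        restrict_mem_identify hγ (flip1_flip1_pair_apply_eq hw h)

theorem IsDeltaMatroid.identify (hM : IsDeltaMatroid M) (hw : w₁ ≠ w₂)
    (hne : ∃ β ∈ M, β w₁ = β w₂) : IsDeltaMatroid (identify M w₁ w₂) := by
  refine ⟨?_, fun g hg g' hg' v hv => ?_⟩
  · obtain ⟨β, hβ, h⟩ := hne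
    exact ⟨_, restrict_mem_identify hβ h⟩
  obtain ⟨β, hβ, hβw, rfl⟩ := exists_of_mem_identify hg
  obtain ⟨β', hβ', hβ'w, rfl⟩ := exists_of_mem_identify hg'
  obtain ⟨y, hy₁, hy₂, hy, hmem⟩ :=
    hM.exists_exchange_across_pair hβ hβ' hw v.prop.1 v.prop.2 hβw hβ'w hv
  refine ⟨⟨y, hy₁, hy₂⟩, hy, ?_⟩
  rw [← restrict_flipS_pair, restrict_mem_identify_iff hw (flipS_val_pair_apply_eq hβw _ _)]
  exact hmem

theorem exists_lift_of_evenNeighbors (hM : IsDeltaMatroid M) (hw : w₁ ≠ w₂) {β : U → Bool}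
    (hβ : β ∈ M) (hβw : β w₁ = β w₂) {g : {x : U // x ≠ w₁ ∧ x ≠ w₂} → Bool}
    (hg : g ∈ identify M w₁ w₂) (hstep : EvenNeighbors (identify M w₁ w₂) (res β) g) :
    ∃ γ ∈ M, γ w₁ = γ w₂ ∧ res γ = g ∧ Reachable M β γ := by
  obtain ⟨u, v, huv, rfl, hu⟩ := hstep
  have huv' : u.val ≠ v.val := fun h => huv (Subtype.ext h)
  rw [← restrict_flip1, restrict_mem_identify_iff hw (flip1_val_apply_eq hβw u)] at hu
  push Not at hu
  have hζw := flip1_val_apply_eq (flip1_val_apply_eq hβw u) v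
  rw [← restrict_flip1, ← restrict_flip1, restrict_mem_identify_iff hw hζw] at hg
  by_cases hζ : flip1 (flip1 β u.val) v.val ∈ M
  · exact ⟨_, hζ, hζw, by rw [restrict_flip1, restrict_flip1],
      Relation.ReflTransGen.single ⟨hβ, hζ, u.val, v.val, huv', rfl, hu.1⟩⟩
  · exact ⟨_, hg.resolve_left hζ, flip1_flip1_pair_apply_eq hw hζw,
      by rw [restrict_flip1_flip1_pair, restrict_flip1, restrict_flip1],
      hM.reachable_flip_four hβ huv' u.prop.1 u.prop.2 v.prop.1 v.prop.2 hu.1 hζ hu.2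
        (hg.resolve_left hζ)⟩

theorem exists_lift_of_reachable (hM : IsDeltaMatroid M) (hw : w₁ ≠ w₂) {α : U → Bool}
    (hα : α ∈ M) (hαw : α w₁ = α w₂) {g : {x : U // x ≠ w₁ ∧ x ≠ w₂} → Bool}
    (h : Reachable (identify M w₁ w₂) (res α) g) :
    ∃ γ ∈ M, γ w₁ = γ w₂ ∧ res γ = g ∧ Reachable M α γ := by
  induction h with
  | refl => exact ⟨α, hα, hαw, rfl, Relation.ReflTransGen.refl⟩
  | tail _ hstep ih =>
    obtain ⟨β, hβ, hβw, rfl, hreach⟩ := ih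
    obtain ⟨-, hg, hstep⟩ := hstep
    obtain ⟨γ, hγ, hγw, hres, hreach'⟩ := exists_lift_of_evenNeighbors hM hw hβ hβw hg hstep
    exact ⟨γ, hγ, hγw, hres, hreach.trans hreach'⟩

theorem numOnes_restrict_add [Fintype U] (hw : w₁ ≠ w₂) (γ : U → Bool) :
    numOnes (res γ) + ((γ w₁).toNat + (γ w₂).toNat) = numOnes γ := by
  rw [numOnes_eq_sum, numOnes_eq_sum, ← Finset.sum_sdiff (Finset.subset_univ {w₁, w₂}),
    Finset.sum_pair hw, Finset.sum_subtype (p := fun x => x ≠ w₁ ∧ x ≠ w₂) _ (by simp)]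
  rfl

theorem IsEvenDeltaMatroid.identify [Fintype U] (hM : IsEvenDeltaMatroid M) (hw : w₁ ≠ w₂)
    (hne : ∃ β ∈ M, β w₁ = β w₂) : IsEvenDeltaMatroid (identify M w₁ w₂) := by
  refine ⟨hM.1.identify hw hne, fun g hg g' hg' => ?_⟩
  obtain ⟨β, hβ, hβw, rfl⟩ := exists_of_mem_identify hg
  obtain ⟨β', hβ', hβ'w, rfl⟩ := exists_of_mem_identify hg'
  have h := hM.2 β hβ β' hβ'
  rw [← numOnes_restrict_add hw β, ← numOnes_restrict_add hw β', hβw, hβ'w] at h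
  omega

theorem IsCoverAt.flip1_restrict_mem_identify [Fintype U] {Mα : Set (U → Bool)}
    {α : U → Bool} (hcov : IsCoverAt M α Mα) (hw : w₁ ≠ w₂) (hγ : γ ∈ M)
    (hγw : γ w₁ = γ w₂) (hreach : Reachable M α γ) (u v : {x : U // x ≠ w₁ ∧ x ≠ w₂})
    (hin : flip1 (flip1 (res γ) u) v ∈ identify Mα w₁ w₂)
    (hout : flip1 (flip1 (res γ) u) v ∉ identify M w₁ w₂) :
    flip1 (res γ) u ∈ identify M w₁ w₂ ∧ flip1 (res γ) v ∈ identify M w₁ w₂ := by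
  have huv : u.val ≠ v.val := by
    intro h
    obtain rfl := Subtype.ext h
    exact hout (by simpa only [flip1_flip1_self] using restrict_mem_identify hγ hγw)
  have hζw := flip1_val_apply_eq (flip1_val_apply_eq hγw u) v
  simp only [← restrict_flip1] at hin hout ⊢
  rw [restrict_mem_identify_iff hw hζw] at hin hout
  rw [restrict_mem_identify_iff hw (flip1_val_apply_eq hγw u),
    restrict_mem_identify_iff hw (flip1_val_apply_eq hγw v)]
  push Not at hout
  rcases hin with hζ | hδ
  · have h := hcov.flip1_mem γ hγ hreach u v hζ hout.1
    exact ⟨Or.inl h.1, Or.inl h.2⟩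
  · exact ⟨hcov.flip1_mem_or hγ hreach huv u.prop.1 u.prop.2 hout.1 hδ hout.2,
      hcov.flip1_mem_or hγ hreach huv.symm v.prop.1 v.prop.2 (by rw [flip1_comm]; exact hout.1)
        (by simpa only [flip1_comm] using hδ) (by simpa only [flip1_comm] using hout.2)⟩

theorem IsCoverAt.identify [Fintype U] {Mα : Set (U → Bool)} {α : U → Bool}
    (hcov : IsCoverAt M α Mα) (hM : IsDeltaMatroid M) (hw : w₁ ≠ w₂) (hα : α ∈ M)
    (hαw : α w₁ = α w₂) : IsCoverAt (identify M w₁ w₂) (res α) (identify Mα w₁ w₂) where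
  isEvenDeltaMatroid := hcov.isEvenDeltaMatroid.identify hw
    ⟨α, hcov.mem_of_reachable α hα Relation.ReflTransGen.refl, hαw⟩
  mem_of_reachable _ _ hreach' := by
    obtain ⟨γ, hγ, hγw, rfl, hreach⟩ := exists_lift_of_reachable hM hw hα hαw hreach'
    exact restrict_mem_identify (hcov.mem_of_reachable γ hγ hreach) hγw
  flip1_mem _ _ hreach' u v hin hout := by
    obtain ⟨γ, hγ, hγw, rfl, hreach⟩ := exists_lift_of_reachable hM hw hα hαw hreach'
    exact hcov.flip1_restrict_mem_identify hw hγ hγw hreach u v hin hout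

end Identify

/-- Identifying two distinct variables of a coverable Δ-matroid (such that some tuple of
`M` agrees on the two variables) yields a coverable Δ-matroid. -/
theorem identify_coverable {U : Type} [Fintype U] [DecidableEq U]
    (M : Set (U → Bool)) (hM : IsDeltaMatroid M) (hMc : Coverable M)
    (w₁ w₂ : U) (hw : w₁ ≠ w₂) (hne : ∃ β ∈ M, β w₁ = β w₂) :
    IsDeltaMatroid (identify M w₁ w₂) ∧ Coverable (identify M w₁ w₂) := by
  refine ⟨hM.identify hw hne, coverable_iff.2 fun α' hα' => ?_⟩
  obtain ⟨α, hα, hαw, rfl⟩ := exists_of_mem_identify hα'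
  obtain ⟨Mα, hcov⟩ := coverable_iff.1 hMc α hα
  exact ⟨_, hcov.identify hM hw hα hαw⟩
end

section
/- Let M = {(0,0,0), (1,1,0), (1,0,1), (0,1,1), (1,1,1)} ⊆ {0,1}^3 and let N = M × M ⊆ {0,1}^6 be the direct product of two disjoint copies of M. Then N is a coverable Δ-matroid but N is not an even-zebra. In particular, the class of coverable Δ-matroids properly contains the class of even-zebras, and even-zebras are not closed under direct products. -/
/-- The 5-tuple Δ-matroid `M = {000, 110, 101, 011, 111}` on three variables. -/
def M3 : Set (Fin 3 → Bool) :=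
  {![false, false, false], ![true, true, false], ![true, false, true],
   ![false, true, true], ![true, true, true]}

/-!
The parity classes of `M3`, namely `{000, 110, 101, 011}` and `{111}`, are even Δ-matroids
contained in `M3`; a witness contained in the Δ-matroid satisfies condition (3) vacuously, so they
show that `M3` is an even-zebra. In a product, an even-neighbour step never flips one coordinate on
each side, since it would pass through a tuple of the product. Hence everything reachable from
`(α, β)` in `N = M3 × M3` lies in the product of the parity classes of `α` and `β`, an even
Δ-matroid inside `N`, and `N` is coverable. It is not an even-zebra: a witness for the odd tuple
`(000, 111)` contains `(111, 011)`, and the exchange axiom between these two at the first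
coordinate of the second factor yields either a tuple of the wrong parity or a tuple `(eᵢ, 011)`
outside `N` whose intermediate tuple `(eᵢ, 111)` lies outside `N` as well.
-/

open Sum

variable {U V : Type*}

lemma exists_elim_eq {γ : Type*} (x : U ⊕ V → γ) : ∃ a b, Sum.elim a b = x :=
  ⟨_, _, Sum.elim_comp_inl_inr x⟩

section Flip

variable [DecidableEq U] [DecidableEq V]

lemma flip1_flip1_eq_flipS {α : V → Bool} {u v : V} (huv : u ≠ v) :
    flip1 (flip1 α u) v = flipS α {u, v} := by
  funext w
  by_cases hu : w = u <;> by_cases hv : w = v <;> simp_all [flip1, flipS]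

lemma flip1_elim_inl (a : U → Bool) (b : V → Bool) (u : U) :
    flip1 (Sum.elim a b) (inl u) = Sum.elim (flip1 a u) b := by
  funext w
  cases w <;> simp [flip1, flipS]

lemma flip1_elim_inr (a : U → Bool) (b : V → Bool) (v : V) :
    flip1 (Sum.elim a b) (inr v) = Sum.elim a (flip1 b v) := by
  funext w
  cases w <;> simp [flip1, flipS]

lemma flipS_elim_inl_inl (a : U → Bool) (b : V → Bool) (u v : U) :
    flipS (Sum.elim a b) {inl u, inl v} = Sum.elim (flipS a {u, v}) b := by
  funext w
  cases w <;> simp [flipS]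

lemma flipS_elim_inr_inr (a : U → Bool) (b : V → Bool) (u v : V) :
    flipS (Sum.elim a b) {inr u, inr v} = Sum.elim a (flipS b {u, v}) := by
  funext w
  cases w <;> simp [flipS]

end Flip

section Parity

variable [Fintype U] [Fintype V]

lemma numOnes_eq_sum_s6 (α : V → Bool) : numOnes α = ∑ v, if α v then 1 else 0 :=
  Finset.card_filter _ _

lemma numOnes_elim (a : U → Bool) (b : V → Bool) :
    numOnes (Sum.elim a b) = numOnes a + numOnes b := by
  rw [numOnes_eq_sum_s6, numOnes_eq_sum_s6, numOnes_eq_sum_s6, Fintype.sum_sum_type]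
  rfl

lemma natCast_numOnes_flip1 [DecidableEq V] (α : V → Bool) (u : V) :
    (numOnes (flip1 α u) : ZMod 2) = numOnes α + 1 := by
  have hrest : ∀ v ∈ ({u}ᶜ : Finset V), flip1 α u v = α v := by
    intro v hv
    simp_all [flip1, flipS]
  have hu : ((if flip1 α u u then 1 else 0 : ℕ) : ZMod 2) = (if α u then 1 else 0 : ℕ) + 1 := by
    cases h : α u <;> simp [flip1, flipS, h, CharTwo.add_self_eq_zero]
  rw [numOnes_eq_sum_s6, numOnes_eq_sum_s6, Fintype.sum_eq_add_sum_compl u,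
    Fintype.sum_eq_add_sum_compl u, Finset.sum_congr rfl fun v hv => by rw [hrest v hv]]
  push_cast at hu ⊢
  rw [hu]
  ring

lemma numOnes_flip1_flip1_mod_two [DecidableEq V] (α : V → Bool) (u v : V) :
    numOnes (flip1 (flip1 α u) v) % 2 = numOnes α % 2 := by
  rw [← ZMod.natCast_eq_natCast_iff', natCast_numOnes_flip1, natCast_numOnes_flip1, add_assoc,
    CharTwo.add_self_eq_zero, add_zero]

end Parity

def parityClass [Fintype V] (M : Set (V → Bool)) (α : V → Bool) : Set (V → Bool) :=
  {β | β ∈ M ∧ numOnes β % 2 = numOnes α % 2}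

instance [Fintype V] (M : Set (V → Bool)) [DecidablePred (· ∈ M)] (α : V → Bool) :
    DecidablePred (· ∈ parityClass M α) :=
  fun β => inferInstanceAs (Decidable (β ∈ M ∧ _))

instance (M : Set (U → Bool)) (N : Set (V → Bool)) [DecidablePred (· ∈ M)]
    [DecidablePred (· ∈ N)] : DecidablePred (· ∈ prodSet M N) :=
  fun _ => inferInstanceAs (Decidable (_ ∈ M ∧ _ ∈ N))

section ParityClass

variable [Fintype V] [DecidableEq V] {M : Set (V → Bool)} {α β : V → Bool}

lemma Reachable.mem_parityClass (hα : α ∈ M) (h : Reachable M α β) :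
    β ∈ parityClass M α := by
  induction h with
  | refl => exact ⟨hα, rfl⟩
  | tail _ hstep ih =>
    obtain ⟨-, hmem, u, v, -, rfl, -⟩ := hstep
    exact ⟨hmem, (numOnes_flip1_flip1_mod_two _ u v).trans ih.2⟩

lemma isEvenDeltaMatroid_parityClass (h : IsDeltaMatroid (parityClass M α)) :
    IsEvenDeltaMatroid (parityClass M α) :=
  ⟨h, fun _ hβ _ hγ => hβ.2.trans hγ.2.symm⟩

theorem isEvenZebra_of_isDeltaMatroid_parityClass
    (h : ∀ α ∈ M, IsDeltaMatroid (parityClass M α)) : IsEvenZebra M :=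
  fun α hα => ⟨parityClass M α, isEvenDeltaMatroid_parityClass (h α hα),
    fun _ hβ hpar => ⟨hβ, hpar⟩, fun _ _ _ _ hin hout => absurd hin.1 hout⟩

theorem coverable_of_subset
    (h : ∀ α ∈ M, ∃ C ⊆ M, IsEvenDeltaMatroid C ∧ ∀ β, Reachable M α β → β ∈ C) :
    Coverable M := by
  intro α hα
  obtain ⟨C, hCM, hC, hreach⟩ := h α hα
  exact ⟨C, hC, fun β _ => hreach β, fun _ _ _ _ _ hin hout => absurd (hCM hin) hout⟩

end ParityClass

section Product

variable [DecidableEq U] [DecidableEq V] {M : Set (U → Bool)} {N : Set (V → Bool)}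

theorem IsDeltaMatroid.prodSet (hM : IsDeltaMatroid M) (hN : IsDeltaMatroid N) :
    IsDeltaMatroid (prodSet M N) := by
  obtain ⟨⟨a₀, ha₀⟩, hMx⟩ := hM
  obtain ⟨⟨b₀, hb₀⟩, hNx⟩ := hN
  refine ⟨⟨Sum.elim a₀ b₀, ha₀, hb₀⟩, fun x hx y hy w hw => ?_⟩
  obtain ⟨a, b, rfl⟩ := exists_elim_eq x
  obtain ⟨a', b', rfl⟩ := exists_elim_eq y
  obtain ⟨ha, hb⟩ := hx
  obtain ⟨ha', hb'⟩ := hy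
  cases w with
  | inl v =>
    obtain ⟨u, hu, hflip⟩ := hMx a ha a' ha' v hw
    refine ⟨inl u, hu, ?_⟩
    rw [flipS_elim_inl_inl]
    exact ⟨hflip, hb⟩
  | inr v =>
    obtain ⟨u, hu, hflip⟩ := hNx b hb b' hb' v hw
    refine ⟨inr u, hu, ?_⟩
    rw [flipS_elim_inr_inr]
    exact ⟨ha, hflip⟩

theorem IsEvenDeltaMatroid.prodSet [Fintype U] [Fintype V] (hM : IsEvenDeltaMatroid M)
    (hN : IsEvenDeltaMatroid N) : IsEvenDeltaMatroid (prodSet M N) := by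
  refine ⟨hM.1.prodSet hN.1, fun x hx y hy => ?_⟩
  obtain ⟨a, b, rfl⟩ := exists_elim_eq x
  obtain ⟨a', b', rfl⟩ := exists_elim_eq y
  rw [numOnes_elim, numOnes_elim, Nat.add_mod, Nat.add_mod (numOnes a'),
    hM.2 a hx.1 a' hy.1, hN.2 b hx.2 b' hy.2]

/-- A step `x ⊕ u ⊕ v` with `u`, `v` in different factors is never an even-neighbour step: it
passes through `x ⊕ u`, which lies in the product. -/
lemma EvenNeighbors.prodSet {a a' : U → Bool} {b b' : V → Bool}
    (hx : Sum.elim a b ∈ prodSet M N) (hy : Sum.elim a' b' ∈ prodSet M N)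
    (h : EvenNeighbors (prodSet M N) (Sum.elim a b) (Sum.elim a' b')) :
    (EvenNeighbors M a a' ∧ b = b') ∨ (a = a' ∧ EvenNeighbors N b b') := by
  obtain ⟨u, v, huv, hstep, hout⟩ := h
  cases u with
  | inl u =>
    rw [flip1_elim_inl] at hout
    cases v with
    | inl v =>
      rw [flip1_elim_inl, flip1_elim_inl, Sum.elim_eq_iff] at hstep
      exact .inl ⟨⟨u, v, (huv <| congrArg inl ·), hstep.1, fun h => hout ⟨h, hx.2⟩⟩, hstep.2.symm⟩
    | inr v =>
      rw [flip1_elim_inl, flip1_elim_inr, Sum.elim_eq_iff] at hstep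
      exact absurd ⟨hstep.1 ▸ hy.1, hx.2⟩ hout
  | inr u =>
    rw [flip1_elim_inr] at hout
    cases v with
    | inl v =>
      rw [flip1_elim_inr, flip1_elim_inl, Sum.elim_eq_iff] at hstep
      exact absurd ⟨hx.1, hstep.2 ▸ hy.2⟩ hout
    | inr v =>
      rw [flip1_elim_inr, flip1_elim_inr, Sum.elim_eq_iff] at hstep
      exact .inr ⟨hstep.1.symm, ⟨u, v, (huv <| congrArg inr ·), hstep.2, fun h => hout ⟨hx.1, h⟩⟩⟩

lemma Reachable.prodSet {x y : U ⊕ V → Bool} (h : Reachable (prodSet M N) x y) :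
    Reachable M (fun u => x (inl u)) (fun u => y (inl u)) ∧
      Reachable N (fun v => x (inr v)) (fun v => y (inr v)) := by
  induction h with
  | refl => exact ⟨.refl, .refl⟩
  | @tail y z _ hstep ih =>
    obtain ⟨hy, hz, hnb⟩ := hstep
    obtain ⟨a, b, rfl⟩ := exists_elim_eq y
    obtain ⟨a', b', rfl⟩ := exists_elim_eq z
    rcases hnb.prodSet hy hz with ⟨hleft, rfl⟩ | ⟨rfl, hright⟩
    · exact ⟨ih.1.tail ⟨hy.1, hz.1, hleft⟩, ih.2⟩
    · exact ⟨ih.1, ih.2.tail ⟨hy.2, hz.2, hright⟩⟩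

theorem coverable_prodSet [Fintype U] [Fintype V]
    (hM : ∀ α ∈ M, IsDeltaMatroid (parityClass M α))
    (hN : ∀ β ∈ N, IsDeltaMatroid (parityClass N β)) : Coverable (prodSet M N) := by
  refine coverable_of_subset fun x ⟨hxM, hxN⟩ => ?_
  refine ⟨prodSet (parityClass M _) (parityClass N _), fun _ hy => ⟨hy.1.1, hy.2.1⟩,
    (isEvenDeltaMatroid_parityClass (hM _ hxM)).prodSet
      (isEvenDeltaMatroid_parityClass (hN _ hxN)), fun y hreach => ?_⟩
  exact ⟨hreach.prodSet.1.mem_parityClass hxM, hreach.prodSet.2.mem_parityClass hxN⟩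

end Product

instance : DecidablePred (· ∈ M3) :=
  fun _ => inferInstanceAs (Decidable (_ ∈ insert _ _))

theorem isDeltaMatroid_M3 : IsDeltaMatroid M3 :=
  ⟨⟨![false, false, false], by decide⟩, by decide⟩

set_option synthInstance.maxSize 1000 in
theorem isDeltaMatroid_parityClass_M3 : ∀ α ∈ M3, IsDeltaMatroid (parityClass M3 α) := by
  have hexch : ∀ α ∈ M3, ∀ x ∈ parityClass M3 α, ∀ y ∈ parityClass M3 α, ∀ v, x v ≠ y v →
      ∃ u, x u ≠ y u ∧ flipS x {u, v} ∈ parityClass M3 α := by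
    decide
  exact fun α hα => ⟨⟨α, hα, rfl⟩, hexch α hα⟩

theorem not_isEvenZebra_prodSet_M3_M3 : ¬ IsEvenZebra (prodSet M3 M3) := by
  intro hzebra
  let α : Fin 3 ⊕ Fin 3 → Bool := Sum.elim ![false, false, false] ![true, true, true]
  let β : Fin 3 ⊕ Fin 3 → Bool := Sum.elim ![true, true, true] ![false, true, true]
  obtain ⟨C, ⟨⟨-, hexch⟩, hparity⟩, hcontains, hcond⟩ := hzebra α (by decide)
  have hαC : α ∈ C := hcontains α (by decide) rfl
  obtain ⟨u, hu, huC⟩ := hexch α hαC β (hcontains β (by decide) (by decide)) (inr 0) (by decide)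
  have hbad : ∀ u, α u ≠ β u →
      numOnes (flipS α {u, inr 0}) % 2 ≠ numOnes α % 2 ∨
        u ≠ inr 0 ∧ flipS α {u, inr 0} ∉ prodSet M3 M3 ∧ flip1 α u ∉ prodSet M3 M3 := by
    decide
  rcases hbad u hu with hodd | ⟨hne, hout, hflip⟩
  · exact hodd (hparity _ huC α hαC)
  · rw [← flip1_flip1_eq_flipS hne] at huC hout
    exact hflip (hcond α (by decide) u (inr 0) huC hout).1

/-- `M3` is an even-zebra Δ-matroid, and its direct product `N = M3 × M3` is a coverable
Δ-matroid which is not an even-zebra.  In particular, coverable Δ-matroids properly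
contain even-zebras, and even-zebras are not closed under direct products. -/
theorem prodSet_M3_M3_coverable_not_evenZebra :
    IsDeltaMatroid M3 ∧ IsEvenZebra M3 ∧
    IsDeltaMatroid (prodSet M3 M3) ∧ Coverable (prodSet M3 M3) ∧
    ¬ IsEvenZebra (prodSet M3 M3) :=
  ⟨isDeltaMatroid_M3, isEvenZebra_of_isDeltaMatroid_parityClass isDeltaMatroid_parityClass_M3,
    isDeltaMatroid_M3.prodSet isDeltaMatroid_M3,
    coverable_prodSet isDeltaMatroid_parityClass_M3 isDeltaMatroid_parityClass_M3,
    not_isEvenZebra_prodSet_M3_M3⟩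
end
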